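/- Let u_M : B^m(a,R) × B^n(b,R) → [0,∞) be measurable with u_M(x,·) harmonic on B^n(b,R) for each x, u_M(·,y) satisfying the K-sub-mean-value inequality for each y, and u_M locally integrable. Then for B̄^{m+n}((a,b),R) contained in the domain: (K/(ν_{m+n}R^{m+n})) ∫_{B^{m+n}((a,b),R)} u_M dλ ≥ (ν_m/(ν_{m+n}R^{m+n})) ∫_{B^n(b,R)} (R² − |y−b|²)^{m/2} u_M(a,y) dλ_n(y) ≥ u_M(a,b) (slicing of the ball via Fubini with the weight (R² − |y−b|²)^{m/2}). -/

import Mathlib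

open MeasureTheory Metric Filter Topology
open scoped ENNReal

noncomputable section

/-- `Euc d` is Euclidean space `ℝ^d`. -/
abbrev Euc (d : ℕ) := EuclideanSpace ℝ (Fin d)

/-- Subharmonic on an open set: upper semicontinuous and satisfying the
sub-mean-value inequality over balls whose closure lies in the set. -/
def IsSubharmonicOn {d : ℕ} (U : Set (Euc d)) (f : Euc d → ℝ) : Prop :=
  UpperSemicontinuousOn f U ∧
    ∀ c ∈ U, ∀ r : ℝ, 0 < r → closedBall c r ⊆ U → f c ≤ ⨍ z in ball c r, f z

/-- Harmonic on an open set: continuous and satisfying the mean value equality. -/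
def IsHarmonicOn {d : ℕ} (U : Set (Euc d)) (f : Euc d → ℝ) : Prop :=
  ContinuousOn f U ∧
    ∀ c ∈ U, ∀ r : ℝ, 0 < r → closedBall c r ⊆ U → f c = ⨍ z in ball c r, f z

/-- Gluing a point of `ℝ^m` and a point of `ℝ^n` into a point of `ℝ^(m+n)`. -/
def glue {m n : ℕ} (x : Euc m) (y : Euc n) : Euc (m + n) :=
  WithLp.toLp 2 (fun i => Fin.addCases (motive := fun _ => ℝ) (fun i => x i) (fun j => y j) i)

/-- The slice `Ω(y) = {x : (x,y) ∈ Ω}`. -/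
def sliceY {m n : ℕ} (Ω : Set (Euc (m + n))) (y : Euc n) : Set (Euc m) :=
  {x | glue x y ∈ Ω}

/-- The slice `Ω(x) = {y : (x,y) ∈ Ω}`. -/
def sliceX {m n : ℕ} (Ω : Set (Euc (m + n))) (x : Euc m) : Set (Euc n) :=
  {y | glue x y ∈ Ω}

def glueEquiv (m n : ℕ) : Euc m × Euc n ≃ᵐ Euc (m + n) :=
  (((MeasurableEquiv.toLp 2 (Fin m → ℝ)).symm).prodCongr
      ((MeasurableEquiv.toLp 2 (Fin n → ℝ)).symm)).trans <|
    ((MeasurableEquiv.sumPiEquivProdPi (fun _ : Fin m ⊕ Fin n => ℝ)).symm.trans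
      (MeasurableEquiv.piCongrLeft (fun _ => ℝ) finSumFinEquiv)).trans
    ((MeasurableEquiv.toLp 2 (Fin (m + n) → ℝ)).symm).symm

lemma glueEquiv_apply {m n : ℕ} (x : Euc m) (y : Euc n) :
    glueEquiv m n (x, y) = glue x y := by
  ext i
  refine Fin.addCases (fun i => ?_) (fun j => ?_) i
  · have := Equiv.piCongrLeft_sumInl (fun _ : Fin (m+n) => ℝ) finSumFinEquiv
      (fun i => x i) (fun j => y j) i
    simp only [finSumFinEquiv_apply_left] at this
    simp only [glue, Fin.addCases_left]
    exact this
  · have := Equiv.piCongrLeft_sumInr (fun _ : Fin (m+n) => ℝ) finSumFinEquiv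
      (fun i => x i) (fun j => y j) j
    simp only [finSumFinEquiv_apply_right] at this
    simp only [glue, Fin.addCases_right]
    exact this

lemma glueEquiv_mp (m n : ℕ) :
    MeasurePreserving (glueEquiv m n) (volume.prod volume) volume := by
  have h1 := (EuclideanSpace.volume_preserving_symm_measurableEquiv_toLp (Fin m)).prod
    (EuclideanSpace.volume_preserving_symm_measurableEquiv_toLp (Fin n))
  have h2 := MeasureTheory.volume_measurePreserving_sumPiEquivProdPi_symm
    (fun _ : Fin m ⊕ Fin n => ℝ)
  have h3 := MeasureTheory.volume_measurePreserving_piCongrLeft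
    (fun _ : Fin (m+n) => ℝ) finSumFinEquiv
  have h4 := (EuclideanSpace.volume_preserving_symm_measurableEquiv_toLp (Fin (m+n))).symm
  exact h4.comp ((h3.comp h2).comp h1)


lemma euc_dist_sq {d : ℕ} (p q : Euc d) :
    dist p q ^ 2 = ∑ i : Fin d, (p i - q i) ^ 2 := by
  rw [EuclideanSpace.dist_eq]
  rw [Real.sq_sqrt (by positivity)]
  simp [Real.dist_eq, sq_abs]

lemma dist_glue {m n : ℕ} (x a : Euc m) (y b : Euc n) :
    dist (glue x y) (glue a b) ^ 2 = dist x a ^ 2 + dist y b ^ 2 := by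
  rw [euc_dist_sq, euc_dist_sq, euc_dist_sq, Fin.sum_univ_add]
  have hx : ∀ i : Fin m, glue x y (Fin.castAdd n i) - glue a b (Fin.castAdd n i)
      = x i - a i := by
    intro i; simp [glue, Fin.addCases_left]
  have hy : ∀ j : Fin n, glue x y (Fin.natAdd m j) - glue a b (Fin.natAdd m j)
      = y j - b j := by
    intro j; simp [glue, Fin.addCases_right]
  simp_rw [hx, hy]

lemma glue_mem_ball {m n : ℕ} {a x : Euc m} {b y : Euc n} {R : ℝ} (hR : 0 < R) :
    glue x y ∈ ball (glue a b) R ↔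
      y ∈ ball b R ∧ x ∈ ball a (Real.sqrt (R ^ 2 - dist y b ^ 2)) := by
  simp only [mem_ball]
  constructor
  · intro h
    have h2 : dist x a ^ 2 + dist y b ^ 2 < R ^ 2 := by
      rw [← dist_glue x a y b]
      exact pow_lt_pow_left₀ h dist_nonneg two_ne_zero
    have hyb : dist y b < R := by
      nlinarith [sq_nonneg (dist x a), dist_nonneg (x := y) (y := b), dist_nonneg (x := x) (y := a)]
    exact ⟨hyb, (Real.lt_sqrt dist_nonneg).2 (by nlinarith)⟩
  · rintro ⟨h1, h2⟩
    have h3 := (Real.lt_sqrt dist_nonneg).1 h2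
    have : dist (glue x y) (glue a b) ^ 2 < R ^ 2 := by
      rw [dist_glue]; nlinarith
    nlinarith [dist_nonneg (x := glue x y) (y := glue a b)]

lemma measurable_glue_pair {m n : ℕ} : Measurable (fun q : Euc m × Euc n => glue q.1 q.2) := by
  have : (fun q : Euc m × Euc n => glue q.1 q.2) = glueEquiv m n := by
    funext q; rw [← glueEquiv_apply]
  rw [this]; exact (glueEquiv m n).measurable

lemma lintegral_ball_glue {m n : ℕ} (a : Euc m) (b : Euc n) {R : ℝ} (hR : 0 < R)
    (F : Euc (m + n) → ℝ≥0∞) (hF : Measurable F) :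
    ∫⁻ p in ball (glue a b) R, F p =
      ∫⁻ y in ball b R, ∫⁻ x in ball a (Real.sqrt (R ^ 2 - dist y b ^ 2)), F (glue x y) := by
  rw [← (glueEquiv_mp m n).setLIntegral_comp_preimage_emb
    (MeasurableEquiv.measurableEmbedding _) F (ball (glue a b) R)]
  have hpre : (glueEquiv m n) ⁻¹' ball (glue a b) R =
      {q : Euc m × Euc n | q.1 ∈ ball a (Real.sqrt (R ^ 2 - dist q.2 b ^ 2))} := by
    ext q
    simp only [Set.mem_preimage, Set.mem_setOf_eq]
    rw [show (glueEquiv m n) q = glue q.1 q.2 from glueEquiv_apply q.1 q.2]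
    refine (glue_mem_ball hR).trans ⟨fun h => h.2, fun h => ⟨?_, h⟩⟩
    have hpos : 0 < Real.sqrt (R ^ 2 - dist q.2 b ^ 2) := dist_nonneg.trans_lt h
    have h2 := Real.sqrt_pos.1 hpos
    simp only [mem_ball]
    nlinarith [dist_nonneg (x := q.2) (y := b)]
  rw [hpre]
  have hmeasset : MeasurableSet {q : Euc m × Euc n |
      q.1 ∈ ball a (Real.sqrt (R ^ 2 - dist q.2 b ^ 2))} := by
    simp only [mem_ball]
    exact measurableSet_lt (by fun_prop) (by fun_prop)
  have hfun : ∀ q : Euc m × Euc n, F ((glueEquiv m n) q) = F (glue q.1 q.2) := by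
    intro q; rw [glueEquiv_apply q.1 q.2]
  have hΦ : Measurable (Set.indicator {q : Euc m × Euc n |
      q.1 ∈ ball a (Real.sqrt (R ^ 2 - dist q.2 b ^ 2))}
      (fun q => F (glue q.1 q.2))) :=
    (hF.comp measurable_glue_pair).indicator hmeasset
  calc ∫⁻ q in {q : Euc m × Euc n | q.1 ∈ ball a (Real.sqrt (R ^ 2 - dist q.2 b ^ 2))},
        F ((glueEquiv m n) q) ∂(volume.prod volume)
      = ∫⁻ q, Set.indicator {q : Euc m × Euc n |
          q.1 ∈ ball a (Real.sqrt (R ^ 2 - dist q.2 b ^ 2))}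
          (fun q => F (glue q.1 q.2)) q ∂(volume.prod volume) := by
        rw [(setLIntegral_congr_fun hmeasset
          (fun q _ => hfun q) :)]
        exact (lintegral_indicator hmeasset _).symm
    _ = ∫⁻ y, ∫⁻ x, Set.indicator {q : Euc m × Euc n |
          q.1 ∈ ball a (Real.sqrt (R ^ 2 - dist q.2 b ^ 2))}
          (fun q => F (glue q.1 q.2)) (x, y) := lintegral_prod_symm _ hΦ.aemeasurable
    _ = ∫⁻ y, ∫⁻ x in ball a (Real.sqrt (R ^ 2 - dist y b ^ 2)), F (glue x y) := by
        refine lintegral_congr fun y => ?_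
        rw [← lintegral_indicator measurableSet_ball]
        rfl
    _ = ∫⁻ y in ball b R, ∫⁻ x in ball a (Real.sqrt (R ^ 2 - dist y b ^ 2)), F (glue x y) := by
        rw [← lintegral_indicator measurableSet_ball]
        refine lintegral_congr fun y => ?_
        by_cases hy : y ∈ ball b R
        · rw [Set.indicator_of_mem hy]
        · rw [Set.indicator_of_notMem hy]
          have : Real.sqrt (R ^ 2 - dist y b ^ 2) = 0 := by
            apply Real.sqrt_eq_zero_of_nonpos
            have : R ≤ dist y b := by simpa [mem_ball, not_lt] using hy
            nlinarith [dist_nonneg (x := y) (y := b), hR]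
          simp [this]

lemma cont_rpow_aux {R q : ℝ} (hq : 0 ≤ q) :
    Continuous fun t : ℝ => (R ^ 2 - t ^ 2) ^ q := by
  rcases eq_or_lt_of_le hq with hq0 | hq0
  · simp only [← hq0, Real.rpow_zero]; exact continuous_const
  · have hc : ∀ x : ℝ, ContinuousAt (fun u : ℝ => u ^ q) x := fun x =>
      Real.continuousAt_rpow_const x q (Or.inr hq0.le)
    exact (continuous_iff_continuousAt.2 hc).comp (by continuity)

lemma hasDeriv_w {R : ℝ} {m : ℕ} (hm : 2 ≤ m) (s : ℝ) :
    HasDerivAt (fun t : ℝ => (R ^ 2 - t ^ 2) ^ ((m : ℝ) / 2))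
      (-((m : ℝ) * s * (R ^ 2 - s ^ 2) ^ ((m : ℝ) / 2 - 1))) s := by
  have h1 : (1 : ℝ) ≤ (m : ℝ) / 2 := by
    have : (2 : ℝ) ≤ (m : ℝ) := by exact_mod_cast hm
    linarith
  have hout := Real.hasDerivAt_rpow_const (x := R ^ 2 - s ^ 2) (p := (m : ℝ) / 2) (Or.inr h1)
  have hin : HasDerivAt (fun t : ℝ => R ^ 2 - t ^ 2) (-(2 * s)) s := by
    simpa using ((hasDerivAt_pow 2 s).const_sub (R ^ 2))
  have := hout.comp s hin
  exact this.congr_deriv (by ring)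

lemma ftc_w {R : ℝ} {m : ℕ} (hm : 2 ≤ m) {ρ : ℝ} (hρ : 0 ≤ ρ) (hρR : ρ ≤ R) :
    (R ^ 2 - ρ ^ 2) ^ ((m : ℝ) / 2)
      = ∫ s in ρ..R, (m : ℝ) * s * (R ^ 2 - s ^ 2) ^ ((m : ℝ) / 2 - 1) := by
  have hq : (0 : ℝ) ≤ (m : ℝ) / 2 - 1 := by
    have : (2 : ℝ) ≤ (m : ℝ) := by exact_mod_cast hm
    linarith
  have hcont : Continuous fun s : ℝ => (m : ℝ) * s * (R ^ 2 - s ^ 2) ^ ((m : ℝ) / 2 - 1) :=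
    (continuous_const.mul continuous_id).mul (cont_rpow_aux hq)
  have := intervalIntegral.integral_eq_sub_of_hasDerivAt
    (f := fun t : ℝ => (R ^ 2 - t ^ 2) ^ ((m : ℝ) / 2))
    (f' := fun s => -((m : ℝ) * s * (R ^ 2 - s ^ 2) ^ ((m : ℝ) / 2 - 1)))
    (fun t _ => hasDeriv_w hm t) (hcont.neg.intervalIntegrable ρ R)
  rw [intervalIntegral.integral_neg] at this
  have hz : ((R : ℝ) ^ 2 - R ^ 2) ^ ((m : ℝ) / 2) = 0 := by
    rw [sub_self, Real.zero_rpow]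
    positivity
  rw [hz] at this
  linarith [this]

lemma ofReal_w_eq {m : ℕ} (hm : 2 ≤ m) {R ρ : ℝ} (hρ : 0 ≤ ρ) (hρR : ρ < R) :
    ENNReal.ofReal ((R ^ 2 - ρ ^ 2) ^ ((m : ℝ) / 2)) =
      ∫⁻ s in Set.Ioo (0 : ℝ) R, (Set.Ioi ρ).indicator
        (fun s => ENNReal.ofReal ((m : ℝ) * s * (R ^ 2 - s ^ 2) ^ ((m : ℝ) / 2 - 1))) s := by
  have hq : (0 : ℝ) ≤ (m : ℝ) / 2 - 1 := by
    have : (2 : ℝ) ≤ (m : ℝ) := by exact_mod_cast hm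
    linarith
  have hcont : Continuous fun s : ℝ => (m : ℝ) * s * (R ^ 2 - s ^ 2) ^ ((m : ℝ) / 2 - 1) :=
    (continuous_const.mul continuous_id).mul (cont_rpow_aux hq)
  rw [ftc_w hm hρ hρR.le, intervalIntegral.integral_of_le hρR.le,
    ofReal_integral_eq_lintegral_ofReal (hcont.integrableOn_Ioc)
      (ae_restrict_of_forall_mem measurableSet_Ioc fun s hs => by
        have h1 : 0 ≤ s := le_trans hρ hs.1.le
        have h2 : 0 ≤ R ^ 2 - s ^ 2 := by nlinarith [hs.2, hρR, hρ]
        positivity)]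
  rw [lintegral_indicator measurableSet_Ioi, Measure.restrict_restrict measurableSet_Ioi]
  have hset : Set.Ioi ρ ∩ Set.Ioo 0 R = Set.Ioo ρ R := by
    ext s
    simp only [Set.mem_inter_iff, Set.mem_Ioi, Set.mem_Ioo]
    constructor
    · rintro ⟨h1, _, h3⟩; exact ⟨h1, h3⟩
    · rintro ⟨h1, h2⟩; exact ⟨h1, lt_of_le_of_lt hρ h1, h2⟩
  rw [hset, ← Measure.restrict_congr_set Ioo_ae_eq_Ioc]

lemma layercake {m n : ℕ} (hm : 2 ≤ m) (hn : 1 ≤ n) (b : Euc n) {R : ℝ} (hR : 0 < R)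
    (V : Euc n → ℝ≥0∞) (hV : Measurable V) :
    ∫⁻ y in ball b R, ENNReal.ofReal ((R ^ 2 - dist y b ^ 2) ^ ((m : ℝ) / 2)) * V y
      = ∫⁻ s in Set.Ioo (0 : ℝ) R,
          ENNReal.ofReal ((m : ℝ) * s * (R ^ 2 - s ^ 2) ^ ((m : ℝ) / 2 - 1))
            * ∫⁻ y in ball b s, V y := by
  have hq : (0 : ℝ) ≤ (m : ℝ) / 2 - 1 := by
    have : (2 : ℝ) ≤ (m : ℝ) := by exact_mod_cast hm
    linarith
  have hhmeas : Measurable fun s : ℝ =>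
      ENNReal.ofReal ((m : ℝ) * s * (R ^ 2 - s ^ 2) ^ ((m : ℝ) / 2 - 1)) :=
    Measurable.ennreal_ofReal
      (((continuous_const.mul continuous_id).mul (cont_rpow_aux hq)).measurable)
  set S : Set (Euc n × ℝ) := {p : Euc n × ℝ | dist p.1 b < p.2} with hS
  have hSmeas : MeasurableSet S := measurableSet_lt (by fun_prop) (by fun_prop)
  set Φ : Euc n → ℝ → ℝ≥0∞ := fun y s =>
    S.indicator (fun p => ENNReal.ofReal
      ((m : ℝ) * p.2 * (R ^ 2 - p.2 ^ 2) ^ ((m : ℝ) / 2 - 1))) (y, s) * V y with hΦ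
  have hΦmeas : Measurable (Function.uncurry Φ) := by
    apply Measurable.mul
    · exact (Measurable.indicator (by fun_prop) hSmeas)
    · exact hV.comp measurable_fst
  have step1 : ∫⁻ y in ball b R,
      ENNReal.ofReal ((R ^ 2 - dist y b ^ 2) ^ ((m : ℝ) / 2)) * V y
      = ∫⁻ y in ball b R, ∫⁻ s in Set.Ioo (0 : ℝ) R, Φ y s := by
    refine setLIntegral_congr_fun measurableSet_ball
      (fun y hy => ?_)
    rw [ofReal_w_eq hm dist_nonneg (mem_ball.1 hy),
      ← lintegral_mul_const (V y) (hhmeas.indicator measurableSet_Ioi)]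
    refine lintegral_congr fun s => ?_
    by_cases h : dist y b < s
    · simp [hΦ, hS, Set.indicator, Set.mem_Ioi, Set.mem_setOf_eq, h]
    · simp [hΦ, hS, Set.indicator, Set.mem_Ioi, Set.mem_setOf_eq, h]
  have step2 : ∫⁻ y in ball b R, ∫⁻ s in Set.Ioo (0 : ℝ) R, Φ y s
      = ∫⁻ s in Set.Ioo (0 : ℝ) R, ∫⁻ y in ball b R, Φ y s :=
    lintegral_lintegral_swap hΦmeas.aemeasurable
  have step3 : ∫⁻ s in Set.Ioo (0 : ℝ) R, ∫⁻ y in ball b R, Φ y s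
      = ∫⁻ s in Set.Ioo (0 : ℝ) R,
          ENNReal.ofReal ((m : ℝ) * s * (R ^ 2 - s ^ 2) ^ ((m : ℝ) / 2 - 1))
            * ∫⁻ y in ball b s, V y := by
    refine setLIntegral_congr_fun measurableSet_Ioo
      (fun s hs => ?_)
    have hpt : ∀ y : Euc n, Φ y s = (ball b s).indicator
        (fun y => ENNReal.ofReal ((m : ℝ) * s * (R ^ 2 - s ^ 2) ^ ((m : ℝ) / 2 - 1)) * V y) y := by
      intro y
      by_cases h : dist y b < s
      · simp [hΦ, hS, Set.indicator, Set.mem_setOf_eq, h, mem_ball]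
      · simp [hΦ, hS, Set.indicator, Set.mem_setOf_eq, h, mem_ball]
    rw [lintegral_congr hpt, lintegral_indicator measurableSet_ball,
      Measure.restrict_restrict measurableSet_ball,
      Set.inter_eq_left.2 (ball_subset_ball hs.2.le),
      lintegral_const_mul' _ _ ENNReal.ofReal_ne_top]
  rw [step1, step2, step3]

lemma dist_glue_same {m n : ℕ} (a : Euc m) (y b : Euc n) :
    dist (glue a y) (glue a b) = dist y b := by
  have h := dist_glue a a y b
  simp only [dist_self] at h
  have h2 : dist (glue a y) (glue a b) ^ 2 = dist y b ^ 2 := by rw [h]; ring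
  have h3 := congrArg Real.sqrt h2
  simpa [Real.sqrt_sq_eq_abs, abs_of_nonneg dist_nonneg] using h3

lemma euc_ball_vol {d : ℕ} (hd : 1 ≤ d) (c : Euc d) {r : ℝ} (hr : 0 ≤ r) :
    volume (ball c r) = ENNReal.ofReal (r ^ d) * volume (ball (0 : Euc d) 1) := by
  haveI : Nonempty (Fin d) := ⟨⟨0, hd⟩⟩
  haveI : Nontrivial (Euc d) := by
    refine ⟨0, EuclideanSpace.single ⟨0, hd⟩ 1, ?_⟩
    intro hcon
    have := congrArg (fun v : Euc d => v ⟨0, hd⟩) hcon.symm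
    simp [EuclideanSpace.single_apply] at this
  have := MeasureTheory.Measure.addHaar_ball (volume : Measure (Euc d)) c hr
  simpa [finrank_euclideanSpace_fin] using this

lemma sqrt_pow_eq {t : ℝ} (ht : 0 ≤ t) (m : ℕ) :
    Real.sqrt t ^ m = t ^ ((m : ℝ) / 2) := by
  rw [← Real.rpow_natCast (Real.sqrt t) m, Real.sqrt_eq_rpow, ← Real.rpow_mul ht]
  congr 1
  ring

lemma measurable_glue_left {m n : ℕ} (a : Euc m) :
    Measurable (fun y : Euc n => glue a y) :=
  measurable_glue_pair.comp (measurable_const.prodMk measurable_id)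

lemma measurable_glue_right {m n : ℕ} (y : Euc n) :
    Measurable (fun x : Euc m => glue x y) :=
  measurable_glue_pair.comp (measurable_id.prodMk measurable_const)

lemma ofReal_integral_le {α : Type*} [MeasurableSpace α] (μ : Measure α) (f : α → ℝ)
    (hf : 0 ≤ᵐ[μ] f) :
    ENNReal.ofReal (∫ x, f x ∂μ) ≤ ∫⁻ x, ENNReal.ofReal (f x) ∂μ := by
  by_cases hfi : Integrable f μ
  · exact le_of_eq (ofReal_integral_eq_lintegral_ofReal hfi hf)
  · rw [integral_undef hfi]
    simp

lemma key_w_lint {m n : ℕ} (hm : 2 ≤ m) (a : Euc m) (b : Euc n) {R : ℝ} (hR : 0 < R) :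
    volume (ball (glue a b) R) =
      (∫⁻ y in ball b R, ENNReal.ofReal ((R ^ 2 - dist y b ^ 2) ^ ((m : ℝ) / 2)))
        * volume (ball (0 : Euc m) 1) := by
  have hq : (0 : ℝ) ≤ (m : ℝ) / 2 := by positivity
  rw [← setLIntegral_one, lintegral_ball_glue a b hR (fun _ => 1) measurable_const]
  have hpt : ∀ y ∈ ball b R,
      (∫⁻ _ in ball a (Real.sqrt (R ^ 2 - dist y b ^ 2)), (1 : ℝ≥0∞))
        = ENNReal.ofReal ((R ^ 2 - dist y b ^ 2) ^ ((m : ℝ) / 2))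
          * volume (ball (0 : Euc m) 1) := by
    intro y hy
    have ht : (0 : ℝ) ≤ R ^ 2 - dist y b ^ 2 := by
      have := mem_ball.1 hy
      nlinarith [dist_nonneg (x := y) (y := b)]
    rw [setLIntegral_one, euc_ball_vol (by omega) a (Real.sqrt_nonneg _), sqrt_pow_eq ht m]
  rw [setLIntegral_congr_fun measurableSet_ball hpt]
  have hcm : Continuous fun y : Euc n => (R ^ 2 - dist y b ^ 2) ^ ((m : ℝ) / 2) :=
    (cont_rpow_aux hq).comp (continuous_id.dist continuous_const)
  exact lintegral_mul_const _ hcm.measurable.ennreal_ofReal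

/-- slicing the ball `B^(m+n)((a,b),R)` via Fubini with the weight
`(R² - |y-b|²)^(m/2)`: the chain of two inequalities relating the `K`-mean of `u_M`
over the full ball, the weighted average of `u_M(a,·)`, and `u_M(a,b)`. -/
theorem stmt6 {m n : ℕ} (hm : 2 ≤ m) (hn : 2 ≤ n) (K : ℝ) (hK : 1 ≤ K)
    (a : Euc m) (b : Euc n) (R : ℝ) (hR : 0 < R)
    (uM : Euc (m + n) → ℝ)
    (hmeas : Measurable uM)
    (h0 : ∀ p ∈ ball (glue a b) R, 0 ≤ uM p)
    (hint : IntegrableOn uM (ball (glue a b) R) volume)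
    (hwint : IntegrableOn
      (fun y => (R ^ 2 - dist y b ^ 2) ^ ((m : ℝ) / 2) * uM (glue a y)) (ball b R) volume)
    (hhar : ∀ x ∈ ball a R, IsHarmonicOn (ball b R) (fun y => uM (glue x y)))
    (hsub : ∀ y ∈ ball b R, ∀ r : ℝ, 0 < r → r ^ 2 ≤ R ^ 2 - dist y b ^ 2 →
      uM (glue a y) ≤ K * ⨍ x in ball a r, uM (glue x y)) :
    uM (glue a b) ≤
        ((volume (ball (0 : Euc m) 1)).toReal /
            ((volume (ball (0 : Euc (m + n)) 1)).toReal * R ^ (m + n))) *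
          ∫ y in ball b R, (R ^ 2 - dist y b ^ 2) ^ ((m : ℝ) / 2) * uM (glue a y) ∧
      ((volume (ball (0 : Euc m) 1)).toReal /
            ((volume (ball (0 : Euc (m + n)) 1)).toReal * R ^ (m + n))) *
          ∫ y in ball b R, (R ^ 2 - dist y b ^ 2) ^ ((m : ℝ) / 2) * uM (glue a y) ≤
        (K / ((volume (ball (0 : Euc (m + n)) 1)).toReal * R ^ (m + n))) *
          ∫ p in ball (glue a b) R, uM p := by
  have hq : (0 : ℝ) ≤ (m : ℝ) / 2 := by positivity
  set Vm : ℝ≥0∞ := volume (ball (0 : Euc m) 1) with hVm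
  set Vmn : ℝ≥0∞ := volume (ball (0 : Euc (m + n)) 1) with hVmn
  set w : Euc n → ℝ := fun y => (R ^ 2 - dist y b ^ 2) ^ ((m : ℝ) / 2) with hw
  set v : Euc n → ℝ := fun y => uM (glue a y) with hv
  set I : ℝ := ∫ y in ball b R, w y * v y with hI
  set J : ℝ := ∫ p in ball (glue a b) R, uM p with hJ
  -- basic positivity facts
  have hVm_pos : 0 < Vm.toReal :=
    ENNReal.toReal_pos (measure_ball_pos volume _ one_pos).ne' measure_ball_lt_top.ne
  have hVmn_pos : 0 < Vmn.toReal :=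
    ENNReal.toReal_pos (measure_ball_pos volume _ one_pos).ne' measure_ball_lt_top.ne
  have hvmeas : Measurable v := hmeas.comp (measurable_glue_left a)
  have hwcont : Continuous w := (cont_rpow_aux hq).comp (continuous_id.dist continuous_const)
  have hglue_mem : ∀ y ∈ ball b R, glue a y ∈ ball (glue a b) R := by
    intro y hy
    rw [mem_ball, dist_glue_same]
    exact mem_ball.1 hy
  have hv0 : ∀ y ∈ ball b R, 0 ≤ v y := fun y hy => h0 _ (hglue_mem y hy)
  have hw0 : ∀ y ∈ ball b R, 0 < R ^ 2 - dist y b ^ 2 := by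
    intro y hy
    have := mem_ball.1 hy
    nlinarith [dist_nonneg (x := y) (y := b)]
  have hwpos : ∀ y ∈ ball b R, 0 < w y := fun y hy => Real.rpow_pos_of_pos (hw0 y hy) _
  have hvb0 : 0 ≤ v b := h0 _ (mem_ball_self hR)
  -- MVP computation: for s ∈ Ioo 0 R
  have hmvp : ∀ s ∈ Set.Ioo (0 : ℝ) R,
      (∫⁻ y in ball b s, ENNReal.ofReal (v y)) = volume (ball b s) * ENNReal.ofReal (v b) := by
    intro s hs
    have hsub_ball : ball b s ⊆ ball b R := ball_subset_ball hs.2.le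
    have hδ : (0 : ℝ) < (R ^ 2 - s ^ 2) ^ ((m : ℝ) / 2) :=
      Real.rpow_pos_of_pos (by nlinarith [hs.1, hs.2]) _
    have hints : IntegrableOn v (ball b s) volume := by
      have hwv : IntegrableOn (fun y => w y * v y) (ball b s) volume :=
        hwint.mono_set hsub_ball
      refine Integrable.mono' (hwv.const_mul (((R ^ 2 - s ^ 2) ^ ((m : ℝ) / 2))⁻¹))
        (hvmeas.aestronglyMeasurable.restrict) ?_
      refine ae_restrict_of_forall_mem measurableSet_ball fun y hy => ?_
      have hyR := hsub_ball hy
      have h1 : (R ^ 2 - s ^ 2) ^ ((m : ℝ) / 2) ≤ w y := by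
        apply Real.rpow_le_rpow (by nlinarith [hs.1, hs.2]) _ hq
        have := mem_ball.1 hy
        nlinarith [dist_nonneg (x := y) (y := b)]
      rw [Real.norm_eq_abs, abs_of_nonneg (hv0 y hyR)]
      have := hv0 y hyR
      have h2 : v y * ((R ^ 2 - s ^ 2) ^ ((m : ℝ) / 2)) ≤ v y * w y := by nlinarith
      calc v y = (((R ^ 2 - s ^ 2) ^ ((m : ℝ) / 2))⁻¹) *
            (v y * ((R ^ 2 - s ^ 2) ^ ((m : ℝ) / 2))) := by field_simp
        _ ≤ (((R ^ 2 - s ^ 2) ^ ((m : ℝ) / 2))⁻¹) * (w y * v y) := by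
            rw [mul_comm (w y) (v y)]
            exact mul_le_mul_of_nonneg_left h2 (by positivity)
    have hmv : v b = ⨍ y in ball b s, v y :=
      (hhar a (mem_ball_self hR)).2 b (mem_ball_self hR) s hs.1 (closedBall_subset_ball hs.2)
    have hvol_pos : 0 < (volume (ball b s)).toReal :=
      ENNReal.toReal_pos (measure_ball_pos volume _ hs.1).ne' measure_ball_lt_top.ne
    have hintv : ∫ y in ball b s, v y = (volume (ball b s)).toReal * v b := by
      rw [hmv, setAverage_eq, smul_eq_mul, measureReal_def]
      field_simp
    rw [← ofReal_integral_eq_lintegral_ofReal hints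
      (ae_restrict_of_forall_mem measurableSet_ball fun y hy => hv0 y (hsub_ball hy)),
      hintv, ENNReal.ofReal_mul ENNReal.toReal_nonneg,
      ENNReal.ofReal_toReal measure_ball_lt_top.ne]
  -- chain 1 : ofReal I = Wl * ofReal (v b)
  set Wl : ℝ≥0∞ := ∫⁻ y in ball b R, ENNReal.ofReal (w y) with hWl
  have hO1 : ENNReal.ofReal I = Wl * ENNReal.ofReal (v b) := by
    have e1 : ENNReal.ofReal I = ∫⁻ y in ball b R, ENNReal.ofReal (w y) * ENNReal.ofReal (v y) := by
      rw [ofReal_integral_eq_lintegral_ofReal hwint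
        (ae_restrict_of_forall_mem measurableSet_ball fun y hy =>
          mul_nonneg (hwpos y hy).le (hv0 y hy))]
      exact setLIntegral_congr_fun measurableSet_ball
        (fun y hy =>
          ENNReal.ofReal_mul (hwpos y hy).le)
    have e2 := layercake (n := n) hm (by omega) b hR (fun y => ENNReal.ofReal (v y))
      hvmeas.ennreal_ofReal
    have e3 := layercake (n := n) hm (by omega) b hR (fun _ => 1) measurable_const
    simp only [mul_one, setLIntegral_one] at e3
    rw [e1, e2]
    rw [setLIntegral_congr_fun measurableSet_Ioo (
      (fun s hs => by rw [hmvp s hs, ← mul_assoc] :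
        ∀ s ∈ Set.Ioo (0:ℝ) R, ENNReal.ofReal ((m : ℝ) * s * (R ^ 2 - s ^ 2) ^ ((m : ℝ) / 2 - 1))
          * ∫⁻ y in ball b s, ENNReal.ofReal (v y)
          = ENNReal.ofReal ((m : ℝ) * s * (R ^ 2 - s ^ 2) ^ ((m : ℝ) / 2 - 1))
            * volume (ball b s) * ENNReal.ofReal (v b)))]
    rw [lintegral_mul_const' _ _ ENNReal.ofReal_ne_top, hWl, e3]
  -- volume identity
  have hkey : volume (ball (glue a b) R) = Wl * Vm := key_w_lint hm a b hR
  have hballR : volume (ball (glue a b) R) = ENNReal.ofReal (R ^ (m + n)) * Vmn :=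
    euc_ball_vol (by omega) _ hR.le
  have hWl_fin : Wl ≠ ⊤ := by
    intro hcon
    have htop : volume (ball (glue a b) R) = ⊤ := by
      rw [hkey, hcon, ENNReal.top_mul (by
        rw [hVm]; exact (measure_ball_pos volume _ one_pos).ne')]
    exact measure_ball_lt_top.ne htop
  have hWl_toReal : Wl.toReal * Vm.toReal = R ^ (m + n) * Vmn.toReal := by
    have := congrArg ENNReal.toReal (hkey.symm.trans hballR)
    rwa [ENNReal.toReal_mul, ENNReal.toReal_mul, ENNReal.toReal_ofReal (by positivity)] at this
  have hI_eq : I = Wl.toReal * v b := by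
    have hI0 : 0 ≤ I := setIntegral_nonneg measurableSet_ball fun y hy =>
      mul_nonneg (hwpos y hy).le (hv0 y hy)
    have := congrArg ENNReal.toReal hO1
    rwa [ENNReal.toReal_ofReal hI0, ENNReal.toReal_mul, ENNReal.toReal_ofReal hvb0] at this
  have hRp : (0:ℝ) < R ^ (m + n) := by positivity
  have hcWl : (Vm.toReal / (Vmn.toReal * R ^ (m + n))) * Wl.toReal = 1 := by
    have hWlv : Wl.toReal = R ^ (m + n) * Vmn.toReal / Vm.toReal := by
      field_simp at hWl_toReal ⊢
      linarith [hWl_toReal]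
    rw [hWlv]
    field_simp
  constructor
  · -- first inequality (equality in fact)
    rw [hI_eq, show (Vm.toReal / (Vmn.toReal * R ^ (m + n))) * (Wl.toReal * v b)
      = ((Vm.toReal / (Vmn.toReal * R ^ (m + n))) * Wl.toReal) * v b by ring, hcWl, one_mul]
  · -- second inequality
    have hstep : I ≤ (K / Vm.toReal) * J := by
      have hJ0 : 0 ≤ J := setIntegral_nonneg measurableSet_ball h0
      have hchain : ENNReal.ofReal I ≤ ENNReal.ofReal ((K / Vm.toReal) * J) := by
        have e1 : ENNReal.ofReal I = ∫⁻ y in ball b R, ENNReal.ofReal (w y * v y) :=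
          ofReal_integral_eq_lintegral_ofReal hwint
            (ae_restrict_of_forall_mem measurableSet_ball fun y hy =>
              mul_nonneg (hwpos y hy).le (hv0 y hy))
        have e2 : ∀ y ∈ ball b R, ENNReal.ofReal (w y * v y)
            ≤ ENNReal.ofReal (K / Vm.toReal) *
              ∫⁻ x in ball a (Real.sqrt (R ^ 2 - dist y b ^ 2)), ENNReal.ofReal (uM (glue x y)) := by
          intro y hy
          set r : ℝ := Real.sqrt (R ^ 2 - dist y b ^ 2) with hr
          have hr0 : 0 < r := Real.sqrt_pos.2 (hw0 y hy)
          have hr2 : r ^ 2 = R ^ 2 - dist y b ^ 2 := Real.sq_sqrt (hw0 y hy).le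
          have hsub2 := hsub y hy r hr0 (le_of_eq hr2)
          have hvol : (volume (ball a r)).toReal = w y * Vm.toReal := by
            rw [euc_ball_vol (by omega) a hr0.le, ENNReal.toReal_mul,
              ENNReal.toReal_ofReal (by positivity), hr, sqrt_pow_eq (hw0 y hy).le]
          have haux : w y * v y ≤ (K / Vm.toReal) * ∫ x in ball a r, uM (glue x y) := by
            rw [setAverage_eq, smul_eq_mul, measureReal_def, hvol] at hsub2
            have hwy := hwpos y hy
            have hKpos : (0:ℝ) < K := lt_of_lt_of_le one_pos hK
            calc w y * v y ≤ w y * (K * ((w y * Vm.toReal)⁻¹ *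
                  ∫ x in ball a r, uM (glue x y))) := by
                  apply mul_le_mul_of_nonneg_left hsub2 hwy.le
              _ = (K / Vm.toReal) * ∫ x in ball a r, uM (glue x y) := by
                  field_simp
          calc ENNReal.ofReal (w y * v y)
              ≤ ENNReal.ofReal ((K / Vm.toReal) * ∫ x in ball a r, uM (glue x y)) :=
                ENNReal.ofReal_le_ofReal haux
            _ = ENNReal.ofReal (K / Vm.toReal) *
                ENNReal.ofReal (∫ x in ball a r, uM (glue x y)) :=
                ENNReal.ofReal_mul (by positivity)
            _ ≤ ENNReal.ofReal (K / Vm.toReal) *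
                ∫⁻ x in ball a r, ENNReal.ofReal (uM (glue x y)) := by
                apply mul_le_mul_right
                apply ofReal_integral_le
                refine ae_restrict_of_forall_mem measurableSet_ball fun x hx => ?_
                exact h0 _ ((glue_mem_ball hR).2 ⟨hy, hx⟩)
        calc ENNReal.ofReal I
            = ∫⁻ y in ball b R, ENNReal.ofReal (w y * v y) := e1
          _ ≤ ∫⁻ y in ball b R, ENNReal.ofReal (K / Vm.toReal) *
              ∫⁻ x in ball a (Real.sqrt (R ^ 2 - dist y b ^ 2)),
                ENNReal.ofReal (uM (glue x y)) :=
              setLIntegral_mono' measurableSet_ball e2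
          _ = ENNReal.ofReal (K / Vm.toReal) *
              ∫⁻ y in ball b R, ∫⁻ x in ball a (Real.sqrt (R ^ 2 - dist y b ^ 2)),
                ENNReal.ofReal (uM (glue x y)) :=
              lintegral_const_mul' _ _ ENNReal.ofReal_ne_top
          _ = ENNReal.ofReal (K / Vm.toReal) *
              ∫⁻ p in ball (glue a b) R, ENNReal.ofReal (uM p) := by
              rw [← lintegral_ball_glue a b hR _ hmeas.ennreal_ofReal]
          _ = ENNReal.ofReal (K / Vm.toReal) * ENNReal.ofReal J := by
              rw [ofReal_integral_eq_lintegral_ofReal hint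
                (ae_restrict_of_forall_mem measurableSet_ball h0)]
          _ = ENNReal.ofReal ((K / Vm.toReal) * J) :=
              (ENNReal.ofReal_mul (by positivity)).symm
      exact (ENNReal.ofReal_le_ofReal_iff (by positivity)).1 hchain
    have hc0 : 0 ≤ Vm.toReal / (Vmn.toReal * R ^ (m + n)) := by positivity
    calc (Vm.toReal / (Vmn.toReal * R ^ (m + n))) * I
        ≤ (Vm.toReal / (Vmn.toReal * R ^ (m + n))) * ((K / Vm.toReal) * J) :=
          mul_le_mul_of_nonneg_left hstep hc0
      _ = (K / (Vmn.toReal * R ^ (m + n))) * J := by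
          field_simp
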